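/- (Probabilistic core of Theorem T:conv.) Let A ∈ ℤ^{N×M}, u ∈ ℤ^N, let B ∈ ℤ^{M×K} be a lattice basis matrix for A, and let S be a finite nonempty subset of F_A(u). Let ((x_t, Y_t))_{t∈ℕ} be an independent sequence of pairs where each x_t is uniformly distributed on S, each Y_t is distributed according to the product-Skellam distribution on ℤ^K with rate vectors λ⁺, λ⁻ ∈ (0,∞)^K, and x_t and Y_t are independent of each other and of all other pairs. Then for every x ∈ F_A(u), almost surely there exists t ∈ ℕ with x = x_t + B Y_t. -/

import Mathlib

open MeasureTheory ProbabilityTheory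

/-- The Skellam probability mass function at `z ∈ ℤ`: the law of the difference of two
independent Poisson random variables with rates `lp` and `lm`. -/
noncomputable def skellamPMF (lp lm : ℝ) (z : ℤ) : ℝ :=
  ∑' ab : ℕ × ℕ,
    if (ab.1 : ℤ) - (ab.2 : ℤ) = z then
      (Real.exp (-lp) * lp ^ ab.1 / (Nat.factorial ab.1)) *
        (Real.exp (-lm) * lm ^ ab.2 / (Nat.factorial ab.2))
    else 0

/-- The product-Skellam probability mass function on `ℤ^K` with rate vectors `lp, lm`. -/
noncomputable def productSkellamPMF {K : ℕ} (lp lm : Fin K → ℝ) (y : Fin K → ℤ) : ℝ :=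
  ∏ k, skellamPMF (lp k) (lm k) (y k)

/-!
Fix `s₀ ∈ S`. Since `x - s₀` lies in the integer kernel of `A`, it equals `B y₀` for some
`y₀ ∈ ℤ^K`. Every Skellam mass is positive, so each step draws the pair `(s₀, y₀)` with the same
positive probability `|S|⁻¹ q(y₀)`. These events are independent and their probabilities sum to
`∞`, so by the second Borel–Cantelli lemma almost surely infinitely many of them occur.
-/

open Filter
open scoped Matrix ENNReal

lemma summable_poisson_mass (r : ℝ) :
    Summable fun n : ℕ => Real.exp (-r) * r ^ n / n.factorial := by
  simpa only [mul_div_assoc] using (Real.summable_pow_div_factorial r).mul_left (Real.exp (-r))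

lemma summable_skellam_mass (lp lm : ℝ) (z : ℤ) :
    Summable fun ab : ℕ × ℕ =>
      if (ab.1 : ℤ) - (ab.2 : ℤ) = z then
        (Real.exp (-lp) * lp ^ ab.1 / (Nat.factorial ab.1)) *
          (Real.exp (-lm) * lm ^ ab.2 / (Nat.factorial ab.2))
      else 0 := by
  have hnorm (r : ℝ) : Summable fun n : ℕ => ‖Real.exp (-r) * r ^ n / n.factorial‖ :=
    (summable_poisson_mass r).norm
  refine ((summable_mul_of_summable_norm (hnorm lp) (hnorm lm)).indicator
    {ab | (ab.1 : ℤ) - ab.2 = z}).congr fun ab => ?_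
  simp only [Set.indicator_apply, Set.mem_ofPred_eq]

lemma skellamPMF_pos {lp lm : ℝ} (hlp : 0 < lp) (hlm : 0 < lm) (z : ℤ) :
    0 < skellamPMF lp lm z := by
  refine (summable_skellam_mass lp lm z).tsum_pos (fun ab => ?_) (z.toNat, (-z).toNat) ?_
  · split_ifs <;> positivity
  · rw [if_pos (Int.toNat_sub_toNat_neg z)]
    positivity

lemma productSkellamPMF_pos {K : ℕ} {lp lm : Fin K → ℝ} (hlp : ∀ k, 0 < lp k)
    (hlm : ∀ k, 0 < lm k) (y : Fin K → ℤ) : 0 < productSkellamPMF lp lm y :=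
  Finset.prod_pos fun k _ => skellamPMF_pos (hlp k) (hlm k) (y k)

lemma Matrix.exists_eq_add_mulVec_of_mulVec_eq {R m n k : Type*} [Ring R] [Fintype n]
    [Fintype k] {A : Matrix m n R} {B : Matrix n k R}
    (hB : ∀ v, A *ᵥ v = 0 → ∃ y, v = B *ᵥ y) {x s : n → R} (h : A *ᵥ x = A *ᵥ s) :
    ∃ y, x = s + B *ᵥ y := by
  obtain ⟨y, hy⟩ := hB (x - s) (by rw [Matrix.mulVec_sub, h, sub_self])
  exact ⟨y, by rw [← hy, add_sub_cancel]⟩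

namespace ProbabilityTheory

variable {Ω α : Type*} [MeasurableSpace Ω] [MeasurableSpace α] {μ : Measure Ω}

lemma iIndepFun.iIndepSet_preimage {Z : ℕ → Ω → α} (hmeas : ∀ t, Measurable (Z t))
    (hindep : iIndepFun Z μ) {D : Set α} (hD : MeasurableSet D) :
    iIndepSet (fun t => Z t ⁻¹' D) μ :=
  (iIndepSet_iff_meas_biInter fun t => hmeas t hD).2 fun s =>
    hindep.measure_inter_preimage_eq_mul s fun _ _ => hD

lemma ae_frequently_mem_of_iIndepSet {s : ℕ → Set Ω} (hsm : ∀ n, MeasurableSet (s n))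
    (hs : iIndepSet s μ) (hsum : ∑' n, μ (s n) = ∞) :
    ∀ᵐ ω ∂μ, ∃ᶠ n in atTop, ω ∈ s n := by
  have := hs.isProbabilityMeasure
  filter_upwards [(mem_ae_iff_prob_eq_one (MeasurableSet.measurableSet_limsup hsm)).2
    (measure_limsup_eq_one hsm hs hsum)] with ω hω
  exact mem_limsup_iff_frequently_mem.1 hω

lemma iIndepFun.ae_frequently_mem {Z : ℕ → Ω → α} (hmeas : ∀ t, Measurable (Z t))
    (hindep : iIndepFun Z μ) {D : Set α} (hD : MeasurableSet D) {c : ℝ≥0∞} (hc : c ≠ 0)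
    (hle : ∀ t, c ≤ μ (Z t ⁻¹' D)) :
    ∀ᵐ ω ∂μ, ∃ᶠ t in atTop, Z t ω ∈ D := by
  refine ae_frequently_mem_of_iIndepSet (fun t => hmeas t hD)
    (hindep.iIndepSet_preimage hmeas hD) (top_le_iff.1 ?_)
  calc ∞ = ∑' _ : ℕ, c := (ENNReal.tsum_const_eq_top_of_ne_zero hc).symm
    _ ≤ ∑' t, μ (Z t ⁻¹' D) := ENNReal.tsum_le_tsum hle

end ProbabilityTheory

theorem ae_exists_discovery_from_uniform_restart_general
    (N M K : ℕ)
    (A : Matrix (Fin N) (Fin M) ℤ) (u : Fin N → ℤ)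
    (B : Matrix (Fin M) (Fin K) ℤ)
    (hBspan : ∀ v : Fin M → ℤ, A.mulVec v = 0 → ∃ y : Fin K → ℤ, v = B.mulVec y)
    (S : Finset (Fin M → ℤ)) (hSne : S.Nonempty)
    (hSsub : ∀ s ∈ S, A.mulVec s = u ∧ ∀ m, 0 ≤ s m)
    (lp lm : Fin K → ℝ) (hlp : ∀ k, 0 < lp k) (hlm : ∀ k, 0 < lm k)
    (Ω : Type*) [MeasurableSpace Ω] (μ : Measure Ω)
    (Z : ℕ → Ω → (Fin M → ℤ) × (Fin K → ℤ))
    (hmeas : ∀ t, Measurable (Z t))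
    (hindep : iIndepFun Z μ)
    (hlaw : ∀ t (s : Fin M → ℤ) (y : Fin K → ℤ),
      μ {ω | Z t ω = (s, y)} =
        if s ∈ S then (S.card : ENNReal)⁻¹ * ENNReal.ofReal (productSkellamPMF lp lm y)
        else 0) :
    ∀ x : Fin M → ℤ, (A.mulVec x = u ∧ ∀ m, 0 ≤ x m) →
      ∀ᵐ ω ∂μ, ∃ t : ℕ, x = (Z t ω).1 + B.mulVec (Z t ω).2 := by
  intro x hx
  obtain ⟨s₀, hs₀⟩ := hSne
  obtain ⟨y₀, hy₀⟩ := Matrix.exists_eq_add_mulVec_of_mulVec_eq hBspan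
    (hx.1.trans (hSsub s₀ hs₀).1.symm)
  have hc : (S.card : ℝ≥0∞)⁻¹ * ENNReal.ofReal (productSkellamPMF lp lm y₀) ≠ 0 :=
    mul_ne_zero (ENNReal.inv_ne_zero.2 (ENNReal.natCast_ne_top _))
      (ENNReal.ofReal_pos.2 (productSkellamPMF_pos hlp hlm y₀)).ne'
  have hhit (t : ℕ) : (S.card : ℝ≥0∞)⁻¹ * ENNReal.ofReal (productSkellamPMF lp lm y₀) ≤
      μ (Z t ⁻¹' {(s₀, y₀)}) :=
    (if_pos hs₀).symm.trans_le (hlaw t s₀ y₀).ge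
  filter_upwards [hindep.ae_frequently_mem hmeas (measurableSet_singleton _) hc hhit]
    with ω hω
  obtain ⟨t, ht⟩ := Frequently.exists hω
  exact ⟨t, by rw [Set.mem_singleton_iff.1 ht, hy₀]⟩

/-- probabilistic core of Theorem T:conv.
Let `S` be a finite nonempty subset of the fiber `F_A(u)` and let `((x_t, Y_t))_{t∈ℕ}` be an
independent sequence of pairs where `x_t` is uniform on `S`, `Y_t` is product-Skellam with
strictly positive rates, and `x_t, Y_t` are independent within each pair (encoded by the
product form of the joint law).  Then for every `x ∈ F_A(u)`, almost surely some step `t`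
satisfies `x = x_t + B Y_t`. -/
theorem ae_exists_discovery_from_uniform_restart
    (N M K : ℕ) (hN : 1 ≤ N) (hM : 1 ≤ M) (hK : 1 ≤ K)
    (A : Matrix (Fin N) (Fin M) ℤ) (u : Fin N → ℤ)
    (B : Matrix (Fin M) (Fin K) ℤ)
    (hBker : ∀ k : Fin K, A.mulVec (fun m => B m k) = 0)
    (hBspan : ∀ v : Fin M → ℤ, A.mulVec v = 0 → ∃ y : Fin K → ℤ, v = B.mulVec y)
    (S : Finset (Fin M → ℤ)) (hSne : S.Nonempty)
    (hSsub : ∀ s ∈ S, A.mulVec s = u ∧ ∀ m, 0 ≤ s m)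
    (lp lm : Fin K → ℝ) (hlp : ∀ k, 0 < lp k) (hlm : ∀ k, 0 < lm k)
    (Ω : Type*) [MeasurableSpace Ω] (μ : Measure Ω) [IsProbabilityMeasure μ]
    (Z : ℕ → Ω → (Fin M → ℤ) × (Fin K → ℤ))
    (hmeas : ∀ t, Measurable (Z t))
    (hindep : iIndepFun Z μ)
    (hlaw : ∀ t (s : Fin M → ℤ) (y : Fin K → ℤ),
      μ {ω | Z t ω = (s, y)} =
        if s ∈ S then (S.card : ENNReal)⁻¹ * ENNReal.ofReal (productSkellamPMF lp lm y)
        else 0) :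
    ∀ x : Fin M → ℤ, (A.mulVec x = u ∧ ∀ m, 0 ≤ x m) →
      ∀ᵐ ω ∂μ, ∃ t : ℕ, x = (Z t ω).1 + B.mulVec (Z t ω).2 :=
  ae_exists_discovery_from_uniform_restart_general N M K A u B hBspan S hSne hSsub lp lm hlp hlm Ω μ
    Z hmeas hindep hlaw
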